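/- Let X be a compact metric space, let (x_i) and (x'_i) be sequences of points of X, and let (p_i) be a fast growing sequence. Suppose both L((x_i)) and L((x'_i)) contain at least two points, and let f be a conjugacy from (O̅(z((p_i),(x_i))),S) to (O̅(z((p_i),(x'_i))),S). Then f maps Toeplitz sequences to Toeplitz sequences: if y ∈ O̅(z((p_i),(x_i))) satisfies Per(y) = ℤ, then Per(f(y)) = ℤ. -/

import Mathlib

open Filter Topology

section Defs

variable {X : Type*}

/-- The shift by `m`: `(shiftZ m z) n = z (n + m)`, so `shiftZ 1` is the left shift `S`
and `shiftZ m = S^m`. -/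
def shiftZ (m : ℤ) (z : ℤ → X) : ℤ → X := fun n => z (n + m)

/-- `Per_p(z)`: the set of positions `n` such that `z m = z n` for all `m ≡ n (mod p)`. -/
def PerSet (p : ℕ) (z : ℤ → X) : Set ℤ :=
  {n : ℤ | ∀ m : ℤ, (p : ℤ) ∣ m - n → z m = z n}

/-- `Per(z) = ⋃_{p ≥ 1} Per_p(z)`. -/
def PerFull (z : ℤ → X) : Set ℤ := {n : ℤ | ∃ p : ℕ, 1 ≤ p ∧ n ∈ PerSet p z}

/-- A Toeplitz sequence: every position is periodic. -/
def IsToeplitz (z : ℤ → X) : Prop := ∀ n : ℤ, n ∈ PerFull z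

/-- A non-periodic sequence: `S^m z ≠ z` for all `m ≠ 0`. -/
def NonPeriodicSeq (z : ℤ → X) : Prop := ∀ m : ℤ, m ≠ 0 → shiftZ m z ≠ z

/-- `u` and `v` have the same `p`-skeleton. -/
def SamePSkeleton (p : ℕ) (u v : ℤ → X) : Prop :=
  PerSet p u = PerSet p v ∧ ∀ n ∈ PerSet p u, u n = v n

/-- A period structure of a (non-periodic) Toeplitz sequence `z`. -/
def IsPeriodStructure (p : ℕ → ℕ) (z : ℤ → X) : Prop :=
  (∀ i, 1 ≤ p i) ∧
  (∀ i q, 1 ≤ q → q < p i → PerSet q z ≠ PerSet (p i) z) ∧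
  (∀ i, p i ∣ p (i + 1)) ∧
  (∀ n : ℤ, ∃ i, n ∈ PerSet (p i) z)

/-- A fast growing sequence of positive integers. -/
def FastGrowing (p : ℕ → ℕ) : Prop :=
  p 0 = 1 ∧ (∀ i, p i ∣ p (i + 1)) ∧ 3 ≤ p 1 ∧ ∀ i, 3 * p i ≤ p (i + 1)

/-- `oxDefined p i` is the set of positions of the Oxtoby sequence that are filled in
after step `i` of the inductive construction (step `i+1` fills, for each `k ≡ 0` or
`-1 (mod p_{i+1}/p_i)`, the still-empty positions `J(i,k)` of the block
`[k p_i, (k+1) p_i)`). -/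
def oxDefined (p : ℕ → ℕ) : ℕ → Set ℤ
  | 0 => ∅
  | i + 1 =>
      oxDefined p i ∪
        {n : ℤ | ∃ k : ℤ,
          (((p (i + 1) / p i : ℕ) : ℤ) ∣ k ∨ ((p (i + 1) / p i : ℕ) : ℤ) ∣ (k + 1)) ∧
          k * (p i : ℤ) ≤ n ∧ n < (k + 1) * (p i : ℤ) ∧ n ∉ oxDefined p i}

/-- `J(i,k)`: the set of positions in `[k p_i, (k+1) p_i)` still undefined after step `i`. -/
def oxJ (p : ℕ → ℕ) (i : ℕ) (k : ℤ) : Set ℤ :=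
  {n : ℤ | k * (p i : ℤ) ≤ n ∧ n < (k + 1) * (p i : ℤ) ∧ n ∉ oxDefined p i}

/-- The Oxtoby sequence `z((p_i),(x_i))`: position `n` receives the value `x_i` where `i`
is the first step after which `n` is defined. -/
noncomputable def oxtoby (p : ℕ → ℕ) (x : ℕ → X) : ℤ → X :=
  fun n => x (sInf {i : ℕ | n ∈ oxDefined p i})

/-- The reverse of a bi-infinite sequence: `x⁻¹(n) = x(-n)`. -/
def revSeq (z : ℤ → X) : ℤ → X := fun n => z (-n)

/-- `[n0, n1]` is a maximal `p`-periodic block in `x`. -/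
def IsMaxPeriodicBlock (p : ℕ) (x : ℤ → X) (n0 n1 : ℤ) : Prop :=
  n0 ≤ n1 ∧ Set.Icc n0 n1 ⊆ PerSet p x ∧
    ∀ n0' n1' : ℤ, n0' ≤ n0 → n1 ≤ n1' → Set.Icc n0' n1' ⊆ PerSet p x →
      n0' = n0 ∧ n1' = n1

variable [TopologicalSpace X]

/-- The orbit closure of `z` in `X^ℤ` with the product topology. -/
def orbitClosure (z : ℤ → X) : Set (ℤ → X) :=
  closure {y : ℤ → X | ∃ m : ℤ, y = shiftZ m z}

/-- The ω-limit set of a sequence: all limits of convergent subsequences. -/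
def omegaLimitSet (x : ℕ → X) : Set X :=
  {a : X | ∃ φ : ℕ → ℕ, StrictMono φ ∧ Tendsto (x ∘ φ) atTop (𝓝 a)}

/-- Two sequences have the same topological type if exactly the same subsequences
converge. -/
def SameTopType {Y : Type*} [TopologicalSpace Y] (x : ℕ → X) (y : ℕ → Y) : Prop :=
  ∀ φ : ℕ → ℕ, StrictMono φ →
    ((∃ a, Tendsto (x ∘ φ) atTop (𝓝 a)) ↔ (∃ a, Tendsto (y ∘ φ) atTop (𝓝 a)))

/-- `f` is a conjugacy between the shift-invariant sets `A` and `B`: a homeomorphism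
from `A` onto `B` commuting with the shift. -/
def IsConjugacy (A B : Set (ℤ → X)) (f : (ℤ → X) → (ℤ → X)) : Prop :=
  Set.MapsTo f A B ∧ ContinuousOn f A ∧
    (∃ g : (ℤ → X) → (ℤ → X), Set.MapsTo g B A ∧ ContinuousOn g B ∧
      (∀ a ∈ A, g (f a) = a) ∧ (∀ b ∈ B, f (g b) = b)) ∧
    ∀ a ∈ A, f (shiftZ 1 a) = shiftZ 1 (f a)

/-- The `m`-th iterate (for `m : ℤ`) of a self-homeomorphism. -/
def iterZ {Y : Type*} [TopologicalSpace Y] (f : Y ≃ₜ Y) (m : ℤ) (a : Y) : Y :=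
  ((f.toEquiv ^ m : Equiv.Perm Y)) a

end Defs

/-!
Let `w = f y` and let `z'` be the second Oxtoby sequence. For every `i`, `w` lies in the orbit
closure of `z'`, so it carries the `p_i`-skeleton of some shift `S^{r_i} z'`. If a position `n`
is ever covered by one of these skeletons, it is periodic in `w`. Otherwise `n + r_i` is still a
hole after step `i` for every `i`. Since `y` is Toeplitz and `f` is continuous and commutes with
the shift, `w` is regularly recurrent at `n`: for each neighbourhood `U` of `w n` there is a
`Q ≥ 1` with `w (n + kQ) ∈ U` for all `k`. Once `gcd(Q, p_i)` has stabilised, the progression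
`n + r_{i+1} + Qℤ` meets a position filled in step `i + 1`, so `x'_{i+1} ∈ U`. Hence `x'_i → w n`,
which contradicts `L((x'_i))` having two points.
-/

section Sequences

variable {X : Type*}

theorem shiftZ_shiftZ (a b : ℤ) (z : ℤ → X) : shiftZ a (shiftZ b z) = shiftZ (b + a) z := by
  funext n
  simp only [shiftZ, add_assoc, add_comm a b]

theorem shiftZ_zero (z : ℤ → X) : shiftZ 0 z = z := by
  funext n
  simp only [shiftZ, add_zero]

theorem mem_perSet_shiftZ {q : ℕ} {r n : ℤ} {z : ℤ → X} :
    n ∈ PerSet q (shiftZ r z) ↔ n + r ∈ PerSet q z := by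
  constructor
  · intro h m hm
    simpa [shiftZ] using h (m - r) (by rwa [sub_sub, add_comm r n])
  · intro h m hm
    exact h (m + r) (by rwa [add_sub_add_right_eq_sub])

theorem mem_perSet_of_dvd_sub {q : ℕ} {z : ℤ → X} {m n : ℤ} (hn : n ∈ PerSet q z)
    (hmn : (q : ℤ) ∣ m - n) : m ∈ PerSet q z := fun m' hm' =>
  (hn m' (by simpa using dvd_add hm' hmn)).trans (hn m hmn).symm

theorem perSet_subset_perSet_of_dvd {q q' : ℕ} (h : q ∣ q') (z : ℤ → X) :
    PerSet q z ⊆ PerSet q' z := fun _ hn m hm =>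
  hn m ((Int.natCast_dvd_natCast.mpr h).trans hm)

theorem perSet_subset_of_eqOn {q : ℕ} {u w : ℤ → X} (h : Set.EqOn w u (PerSet q u)) :
    PerSet q u ⊆ PerSet q w := fun n hn m hm => by
  rw [h (mem_perSet_of_dvd_sub hn hm), h hn, hn m hm]

theorem IsToeplitz.exists_subset_perSet {y : ℤ → X} (hy : IsToeplitz y) {F : Set ℤ}
    (hF : F.Finite) : ∃ Q : ℕ, 0 < Q ∧ F ⊆ PerSet Q y := by
  induction F, hF using Set.Finite.induction_on with
  | empty => exact ⟨1, one_pos, Set.empty_subset _⟩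
  | @insert n F _ _ ih =>
    obtain ⟨Q, hQ, hF⟩ := ih
    obtain ⟨q, hq, hn⟩ := hy n
    refine ⟨q * Q, Nat.mul_pos hq hQ, Set.insert_subset ?_ ?_⟩
    · exact perSet_subset_perSet_of_dvd (dvd_mul_right q Q) y hn
    · exact hF.trans (perSet_subset_perSet_of_dvd (dvd_mul_left Q q) y)

theorem commute_shiftZ {A : Set (ℤ → X)} {f : (ℤ → X) → (ℤ → X)}
    (hA : ∀ a ∈ A, ∀ m, shiftZ m a ∈ A) (hf : ∀ a ∈ A, f (shiftZ 1 a) = shiftZ 1 (f a))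
    (m : ℤ) {a : ℤ → X} (ha : a ∈ A) : f (shiftZ m a) = shiftZ m (f a) := by
  induction m using Int.induction_on with
  | zero => rw [shiftZ_zero, shiftZ_zero]
  | succ i ih => rw [← shiftZ_shiftZ, hf _ (hA a ha i), ih, shiftZ_shiftZ]
  | pred i ih =>
    calc f (shiftZ (-i - 1) a) = shiftZ (-1) (shiftZ 1 (f (shiftZ (-i - 1) a))) := by
          rw [shiftZ_shiftZ, add_neg_cancel, shiftZ_zero]
      _ = shiftZ (-1) (f (shiftZ (-i) a)) := by
          rw [← hf _ (hA a ha _), shiftZ_shiftZ, sub_add_cancel]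
      _ = shiftZ (-i - 1) (f a) := by rw [ih, shiftZ_shiftZ, sub_eq_add_neg]

variable [TopologicalSpace X]

theorem mapsTo_shiftZ_orbitClosure (z : ℤ → X) (m : ℤ) :
    Set.MapsTo (shiftZ m) (orbitClosure z) (orbitClosure z) := by
  refine Set.MapsTo.closure ?_ (continuous_pi fun n => continuous_apply (n + m))
  rintro _ ⟨k, rfl⟩
  exact ⟨k + m, shiftZ_shiftZ m k z⟩

theorem IsToeplitz.exists_forall_shiftZ_mem {y : ℤ → X} (hy : IsToeplitz y)
    {V : Set (ℤ → X)} (hV : V ∈ 𝓝 y) : ∃ Q : ℕ, 0 < Q ∧ ∀ k : ℤ, shiftZ (k * Q) y ∈ V := by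
  rw [nhds_pi, Filter.mem_pi] at hV
  obtain ⟨F, hF, t, ht, hFV⟩ := hV
  obtain ⟨Q, hQ, hFQ⟩ := hy.exists_subset_perSet hF
  refine ⟨Q, hQ, fun k => hFV fun n hn => ?_⟩
  have hper : y (n + k * Q) = y n := hFQ hn _ (by simp)
  simpa only [shiftZ, hper] using mem_of_mem_nhds (ht n)

theorem IsToeplitz.exists_forall_apply_add_mul_mem {A : Set (ℤ → X)} {f : (ℤ → X) → (ℤ → X)}
    (hA : ∀ a ∈ A, ∀ m, shiftZ m a ∈ A) (hcont : ContinuousOn f A)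
    (hcomm : ∀ a ∈ A, f (shiftZ 1 a) = shiftZ 1 (f a)) {y : ℤ → X} (hyA : y ∈ A)
    (hy : IsToeplitz y) (n : ℤ) {U : Set X} (hU : U ∈ 𝓝 (f y n)) :
    ∃ Q : ℕ, 0 < Q ∧ ∀ k : ℤ, f y (n + k * Q) ∈ U := by
  have hpre : {a | f a n ∈ U} ∈ 𝓝[A] y :=
    ((continuous_apply n).continuousAt.tendsto.comp (hcont y hyA)) hU
  obtain ⟨V, hV, hVA⟩ := mem_nhdsWithin_iff_exists_mem_nhds_inter.mp hpre
  obtain ⟨Q, hQ, hshift⟩ := hy.exists_forall_shiftZ_mem hV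
  refine ⟨Q, hQ, fun k => ?_⟩
  have hmem : f (shiftZ (k * Q) y) n ∈ U := hVA ⟨hshift k, hA y hyA _⟩
  rwa [commute_shiftZ hA hcomm _ hyA] at hmem

variable [T2Space X]

theorem isClosed_setOfPred_eqOn (g : ℤ → X) (s : Set ℤ) :
    IsClosed {w : ℤ → X | Set.EqOn w g s} := by
  simp only [Set.EqOn, Set.ofPred_forall]
  exact isClosed_iInter fun n => isClosed_iInter fun _ =>
    isClosed_eq (continuous_apply n) continuous_const

theorem exists_eqOn_perSet_of_mem_orbitClosure {q : ℕ} (hq : 0 < q) {z w : ℤ → X}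
    (hw : w ∈ orbitClosure z) : ∃ r : ℤ, Set.EqOn w (shiftZ r z) (PerSet q (shiftZ r z)) := by
  set T := ⋃ r ∈ Finset.Ico (0 : ℤ) q,
    {v : ℤ → X | Set.EqOn v (shiftZ r z) (PerSet q (shiftZ r z))}
  have hT : IsClosed T := Set.Finite.isClosed_biUnion (Finset.finite_toSet _) fun r _ =>
    isClosed_setOfPred_eqOn _ _
  have horbit : {v | ∃ m : ℤ, v = shiftZ m z} ⊆ T := by
    rintro _ ⟨m, rfl⟩
    have hq' : (0 : ℤ) < q := by exact_mod_cast hq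
    refine Set.mem_biUnion (x := m % q) (Finset.mem_Ico.mpr
      ⟨Int.emod_nonneg m hq'.ne', Int.emod_lt_of_pos m hq'⟩) fun n hn => ?_
    show z (n + m) = z (n + m % q)
    refine mem_perSet_shiftZ.mp hn (n + m) ⟨m / q, ?_⟩
    linear_combination -(Int.mul_ediv_add_emod m q)
  obtain ⟨r, -, hr⟩ := Set.mem_iUnion₂.mp (closure_minimal horbit hT hw)
  exact ⟨r, hr⟩

theorem subsingleton_omegaLimitSet_of_tendsto {x : ℕ → X} {a : X}
    (hx : Tendsto x atTop (𝓝 a)) : (omegaLimitSet x).Subsingleton := by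
  have hmem : ∀ b ∈ omegaLimitSet x, b = a := fun _ ⟨_, hφ, hb⟩ =>
    tendsto_nhds_unique hb (hx.comp hφ.tendsto_atTop)
  exact fun b hb c hc => (hmem b hb).trans (hmem c hc).symm

end Sequences

theorem exists_dvd_mul_add_mul_of_gcd_eq {Q a b : ℕ} (h : Nat.gcd Q a = Nat.gcd Q b) (c : ℤ) :
    ∃ k : ℤ, (b : ℤ) ∣ k * Q + c * a := by
  obtain ⟨e, he⟩ : Nat.gcd Q b ∣ a := h ▸ Nat.gcd_dvd_right Q a
  refine ⟨-(c * e * Nat.gcdA Q b), Nat.gcdB Q b * c * e, ?_⟩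
  rw [he]
  push_cast
  linear_combination (c * e) * Nat.gcd_eq_gcd_ab Q b

section FastGrowing

variable {p : ℕ → ℕ}

theorem FastGrowing.pos (hp : FastGrowing p) (i : ℕ) : 0 < p i := by
  obtain ⟨h0, -, -, hgrow⟩ := hp
  induction i with
  | zero => rw [h0]; exact one_pos
  | succ i ih => linarith [hgrow i]

theorem FastGrowing.dvd_succ (hp : FastGrowing p) (i : ℕ) : p i ∣ p (i + 1) := hp.2.1 i

theorem dvd_of_le_of_dvd_succ (hdvd : ∀ i, p i ∣ p (i + 1)) {i j : ℕ} (h : i ≤ j) :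
    p i ∣ p j := by
  induction j, h using Nat.le_induction with
  | base => exact dvd_rfl
  | succ j _ ih => exact ih.trans (hdvd j)

theorem eventually_gcd_eq_gcd_succ (hdvd : ∀ i, p i ∣ p (i + 1)) {Q : ℕ} (hQ : 0 < Q) :
    ∀ᶠ i in atTop, Nat.gcd Q (p i) = Nat.gcd Q (p (i + 1)) := by
  have hmono : Monotone fun i => Nat.gcd Q (p i) := monotone_nat_of_le_succ fun i =>
    Nat.le_of_dvd (Nat.gcd_pos_of_pos_left _ hQ) (Nat.gcd_dvd_gcd_of_dvd_right Q (hdvd i))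
  have hbdd : BddAbove (Set.range fun i => Nat.gcd Q (p i)) :=
    ⟨Q, Set.forall_mem_range.mpr fun i => Nat.le_of_dvd hQ (Nat.gcd_dvd_left Q (p i))⟩
  have hlim := tendsto_atTop_ciSup hmono hbdd
  rw [nhds_discrete, tendsto_pure] at hlim
  filter_upwards [hlim, (tendsto_add_atTop_nat 1).eventually hlim] with i h h' using h.trans h'.symm

theorem oxDefined_mono (p : ℕ → ℕ) : Monotone (oxDefined p) :=
  monotone_nat_of_le_succ fun _ => Set.subset_union_left

theorem periodic_oxDefined (hdvd : ∀ i, p i ∣ p (i + 1)) (i : ℕ) :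
    Function.Periodic (· ∈ oxDefined p i) (p i : ℤ) := by
  induction i with
  | zero => exact fun _ => rfl
  | succ i ih =>
    have hq : (p (i + 1) : ℤ) = ((p (i + 1) / p i : ℕ) : ℤ) * p i := by
      rw [← Nat.cast_mul, Nat.div_mul_cancel (hdvd i)]
    set q : ℤ := ((p (i + 1) / p i : ℕ) : ℤ)
    have hD : Function.Periodic (· ∈ oxDefined p i) (p (i + 1) : ℤ) := hq ▸ ih.int_mul q
    have hadd : ∀ n (t : ℤ), n ∈ oxDefined p (i + 1) → n + t * p (i + 1) ∈ oxDefined p (i + 1) := by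
      rintro n t (hn | ⟨k, hk, hlo, hhi, hnD⟩)
      · exact Or.inl ((hD.int_mul t n).mpr hn)
      · have hblock : (k + t * q) * p i = k * p i + t * p (i + 1) := by rw [hq]; ring
        refine Or.inr ⟨k + t * q, ?_, by linarith, by linarith,
          fun h => hnD ((hD.int_mul t n).mp h)⟩
        rcases hk with hk | hk
        · exact Or.inl (dvd_add hk (dvd_mul_left q t))
        · exact Or.inr (by simpa only [add_right_comm] using dvd_add hk (dvd_mul_left q t))
    refine fun n => propext ⟨fun h => ?_, fun h => by simpa using hadd n 1 h⟩
    simpa using hadd _ (-1) h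

theorem mem_oxDefined_iff_of_dvd_sub (hdvd : ∀ i, p i ∣ p (i + 1)) {i j : ℕ} (hj : j ≤ i)
    {m n : ℤ} (hmn : (p i : ℤ) ∣ m - n) : m ∈ oxDefined p j ↔ n ∈ oxDefined p j := by
  obtain ⟨s, hs⟩ := (Int.natCast_dvd_natCast.mpr (dvd_of_le_of_dvd_succ hdvd hj)).trans hmn
  rw [show m = n + s * p j by linear_combination hs]
  exact iff_of_eq ((periodic_oxDefined hdvd j).int_mul s n)

variable {X : Type*}

theorem oxDefined_subset_perSet (hdvd : ∀ i, p i ∣ p (i + 1)) (x : ℕ → X) (i : ℕ) :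
    oxDefined p i ⊆ PerSet (p i) (oxtoby p x) := fun n hn m hmn => by
  unfold oxtoby
  congr 2
  ext j
  rcases le_total j i with hj | hj
  · exact mem_oxDefined_iff_of_dvd_sub hdvd hj hmn
  · exact iff_of_true (oxDefined_mono p hj ((mem_oxDefined_iff_of_dvd_sub hdvd le_rfl hmn).mpr hn))
      (oxDefined_mono p hj hn)

theorem oxtoby_eq_of_mem_oxDefined_succ (x : ℕ → X) {i : ℕ} {n : ℤ}
    (hn : n ∈ oxDefined p (i + 1)) (hn' : n ∉ oxDefined p i) : oxtoby p x n = x (i + 1) := by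
  unfold oxtoby
  rw [(Nat.sInf_upward_closed_eq_succ_iff (s := {j | n ∈ oxDefined p j})
    (fun _ _ h hn => oxDefined_mono p h hn) i).mpr ⟨hn, hn'⟩]

theorem exists_add_mul_mem_oxDefined_succ (hp : FastGrowing p) {Q i : ℕ}
    (hQ : Nat.gcd Q (p i) = Nat.gcd Q (p (i + 1))) {c : ℤ} (hc : c ∉ oxDefined p i) :
    ∃ k : ℤ, c + k * Q ∈ oxDefined p (i + 1) ∧ c + k * Q ∉ oxDefined p i := by
  have hq : (p (i + 1) : ℤ) = ((p (i + 1) / p i : ℕ) : ℤ) * p i := by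
    rw [← Nat.cast_mul, Nat.div_mul_cancel (hp.dvd_succ i)]
  set q : ℤ := ((p (i + 1) / p i : ℕ) : ℤ)
  have hpos : (0 : ℤ) < p i := by exact_mod_cast hp.pos i
  obtain ⟨k, t, hkt⟩ := exists_dvd_mul_add_mul_of_gcd_eq hQ (c / p i)
  -- `c + kQ` has the residue of `c` mod `p_i` and lies in a block whose index is divisible by `q`
  have hck : c + k * Q = c % p i + t * q * p i := by
    linear_combination hkt + t * hq - Int.mul_ediv_add_emod c (p i)
  have hnew : c + k * Q ∉ oxDefined p i := by
    rw [show c + k * Q = c + (t * q - c / p i) * p i by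
      linear_combination hck + Int.mul_ediv_add_emod c (p i)]
    exact fun h => hc (((periodic_oxDefined hp.dvd_succ i).int_mul _ c).mp h)
  refine ⟨k, Or.inr ⟨t * q, Or.inl (dvd_mul_left q t), ?_, ?_, hnew⟩, hnew⟩
  · linarith [Int.emod_nonneg c hpos.ne']
  · linarith [Int.emod_lt_of_pos c hpos]

theorem tendsto_apply_of_forall_not_mem_oxDefined [TopologicalSpace X] (hp : FastGrowing p)
    {x' : ℕ → X} {w : ℤ → X} {r : ℕ → ℤ}
    (hr : ∀ i, Set.EqOn w (shiftZ (r i) (oxtoby p x')) (PerSet (p i) (shiftZ (r i) (oxtoby p x'))))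
    {n : ℤ} (hn : ∀ i, n + r i ∉ oxDefined p i)
    (hrec : ∀ U ∈ 𝓝 (w n), ∃ Q : ℕ, 0 < Q ∧ ∀ k : ℤ, w (n + k * Q) ∈ U) :
    Tendsto x' atTop (𝓝 (w n)) := by
  refine (tendsto_add_atTop_iff_nat 1).mp fun U hU => ?_
  obtain ⟨Q, hQ, hQU⟩ := hrec U hU
  show ∀ᶠ i in atTop, x' (i + 1) ∈ U
  filter_upwards [eventually_gcd_eq_gcd_succ hp.dvd_succ hQ] with i hi
  obtain ⟨k, hnew, hold⟩ := exists_add_mul_mem_oxDefined_succ hp hi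
    fun h => hn (i + 1) (oxDefined_mono p i.le_succ h)
  have hper : n + k * Q ∈ PerSet (p (i + 1)) (shiftZ (r (i + 1)) (oxtoby p x')) := by
    rw [mem_perSet_shiftZ, add_right_comm]
    exact oxDefined_subset_perSet hp.dvd_succ x' _ hnew
  have hval : w (n + k * Q) = x' (i + 1) := by
    rw [hr (i + 1) hper, shiftZ, add_right_comm]
    exact oxtoby_eq_of_mem_oxDefined_succ x' hnew hold
  exact hval ▸ hQU k

end FastGrowing

theorem oxtoby_conjugacy_preserves_toeplitz_general {X : Type*} [MetricSpace X]
    (x x' : ℕ → X) (p : ℕ → ℕ) (hp : FastGrowing p)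
    (hL' : (omegaLimitSet x').Nontrivial)
    (f : (ℤ → X) → (ℤ → X))
    (hf : IsConjugacy (orbitClosure (oxtoby p x)) (orbitClosure (oxtoby p x')) f) :
    ∀ y ∈ orbitClosure (oxtoby p x), IsToeplitz y → IsToeplitz (f y) := by
  intro y hy hyT n
  obtain ⟨hmaps, hcont, -, hcomm⟩ := hf
  choose r hr using fun i => exists_eqOn_perSet_of_mem_orbitClosure (hp.pos i) (hmaps hy)
  by_cases hcovered : ∃ i, n + r i ∈ oxDefined p i
  · obtain ⟨i, hi⟩ := hcovered
    refine ⟨p i, hp.pos i, perSet_subset_of_eqOn (hr i) (mem_perSet_shiftZ.mpr ?_)⟩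
    exact oxDefined_subset_perSet hp.dvd_succ x' i hi
  · push Not at hcovered
    have hrec := fun U (hU : U ∈ 𝓝 (f y n)) => hyT.exists_forall_apply_add_mul_mem
      (fun a ha m => mapsTo_shiftZ_orbitClosure _ m ha) hcont hcomm hy n hU
    have hlim := tendsto_apply_of_forall_not_mem_oxDefined hp hr hcovered hrec
    exact (hL'.not_subsingleton (subsingleton_omegaLimitSet_of_tendsto hlim)).elim

/-- Lemma `ToptoTop`: if `L((x_i))` and `L((x'_i))` both have at least two
points, any conjugacy between the corresponding Oxtoby systems maps Toeplitz sequences to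
Toeplitz sequences. -/
theorem oxtoby_conjugacy_preserves_toeplitz {X : Type*} [MetricSpace X] [CompactSpace X]
    (x x' : ℕ → X) (p : ℕ → ℕ) (hp : FastGrowing p)
    (hL : (omegaLimitSet x).Nontrivial) (hL' : (omegaLimitSet x').Nontrivial)
    (f : (ℤ → X) → (ℤ → X))
    (hf : IsConjugacy (orbitClosure (oxtoby p x)) (orbitClosure (oxtoby p x')) f) :
    ∀ y ∈ orbitClosure (oxtoby p x), IsToeplitz y → IsToeplitz (f y) :=
  oxtoby_conjugacy_preserves_toeplitz_general x x' p hp hL' f hf
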